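/- Tightness direction of Proposition 2: let δ ≥ 0 and suppose the linear program defining p⋆(δ) attains its optimal value at some pair (θ⋆, θ̂⋆), with p⋆(δ) > 0. Then there exists an atomic congestion game with at most n agents — i.e., a finite resource set E, action sets 𝒜_i ⊆ 2^E, and parameters γ ∈ ℝ_{≥0}^{E×[m]} so that each resource cost is ℓ_e(·;γ) = Σ_j γ_{e,j} b_j(·) — together with γ̃ ∈ ℝ_{≥0}^{E×[m]} satisfying |γ̃_{e,j} − γ_{e,j}| ≤ δ·γ_{e,j} for all e, j, and a pure Nash equilibrium a^NE of (G(γ), T(γ̃)) and an allocation a' ∈ 𝒜 such that L(a'; γ) = p⋆(δ)·L(a^NE; γ) and L(a^NE;γ) > 0; consequently PoA(G(γ), T(γ̃)) ≥ 1/p⋆(δ), so the worst-case price of anarchy over this class of games equals 1/p⋆(δ). -/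

import Mathlib

open Finset

namespace CG

variable {n m : ℕ} {E : Type} [Fintype E] [DecidableEq E]

/-- `load a e` is the number of agents using resource `e` under allocation `a`. -/
def load (a : Fin n → Finset E) (e : E) : ℕ :=
  (Finset.univ.filter fun i => e ∈ a i).card

/-- the cost `ℓ_e(k; γ) = Σ_j γ_{e,j} b_j(k)` of resource `e` at load `k`. -/
def resCost (b : Fin m → ℕ → ℝ) (γ : E → Fin m → ℝ) (e : E) (k : ℕ) : ℝ :=
  ∑ j, γ e j * b j k

/-- the toll `τ_e(k; γ̃) = Σ_j γ̃_{e,j} τ_j⋆(k)` on resource `e` at load `k`. -/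
def resToll (τs : Fin m → ℕ → ℝ) (γt : E → Fin m → ℝ) (e : E) (k : ℕ) : ℝ :=
  ∑ j, γt e j * τs j k

/-- agent `i`'s cost `J_i(a; γ, γ̃)` at allocation `a`. -/
def agentCost (b τs : Fin m → ℕ → ℝ) (γ γt : E → Fin m → ℝ)
    (a : Fin n → Finset E) (i : Fin n) : ℝ :=
  ∑ e ∈ a i, (resCost b γ e (load a e) + resToll τs γt e (load a e))

/-- `a` is a pure Nash equilibrium of the tolled congestion game `(G(γ), T(γ̃))`. -/
def IsNash (A : Fin n → Finset (Finset E)) (b τs : Fin m → ℕ → ℝ)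
    (γ γt : E → Fin m → ℝ) (a : Fin n → Finset E) : Prop :=
  (∀ i, a i ∈ A i) ∧
    ∀ i : Fin n, ∀ ai' ∈ A i,
      agentCost b τs γ γt a i ≤ agentCost b τs γ γt (Function.update a i ai') i

/-- the system cost `L(a; γ) = Σ_e |a|_e ℓ_e(|a|_e; γ)`. -/
def sysCost (b : Fin m → ℕ → ℝ) (γ : E → Fin m → ℝ) (a : Fin n → Finset E) : ℝ :=
  ∑ e, (load a e : ℝ) * resCost b γ e (load a e)

/-- the price of anarchy `PoA(G(γ), T(γ̃))`. -/
noncomputable def PoA (A : Fin n → Finset (Finset E)) (b τs : Fin m → ℕ → ℝ)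
    (γ γt : E → Fin m → ℝ) : ℝ :=
  sSup (sysCost b γ '' {a | IsNash A b τs γ γt a}) /
    sInf (sysCost b γ '' {a : Fin n → Finset E | ∀ i, a i ∈ A i})

/-- `x_e`: number of agents using `e` under both `a` and `a'`. -/
def labelX (a a' : Fin n → Finset E) (e : E) : ℕ :=
  (Finset.univ.filter fun i => e ∈ a i ∧ e ∈ a' i).card

/-- `y_e`: number of agents using `e` under `a` but not `a'`. -/
def labelY (a a' : Fin n → Finset E) (e : E) : ℕ :=
  (Finset.univ.filter fun i => e ∈ a i ∧ e ∉ a' i).card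

/-- `z_e`: number of agents using `e` under `a'` but not `a`. -/
def labelZ (a a' : Fin n → Finset E) (e : E) : ℕ :=
  (Finset.univ.filter fun i => e ∉ a i ∧ e ∈ a' i).card

/-- `θ(x,y,z,j) = Σ_{e : (x_e,y_e,z_e) = (x,y,z)} γ_{e,j}`. -/
def labelSum (γ : E → Fin m → ℝ) (a a' : Fin n → Finset E) (x y z : ℕ) (j : Fin m) : ℝ :=
  ∑ e ∈ Finset.univ.filter
      (fun e => labelX a a' e = x ∧ labelY a a' e = y ∧ labelZ a a' e = z),
    γ e j

/-- sum of `f` over the index set `I = {(x,y,z,j) : 1 ≤ x+y+z ≤ n}`. -/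
def sumI (n : ℕ) (f : ℕ → ℕ → ℕ → Fin m → ℝ) : ℝ :=
  ∑ x ∈ Finset.range (n + 1), ∑ y ∈ Finset.range (n + 1), ∑ z ∈ Finset.range (n + 1),
    ∑ j : Fin m, if 1 ≤ x + y + z ∧ x + y + z ≤ n then f x y z j else 0

/-- feasibility for the robust-PoA linear program at misspecification level `δ`. -/
def Feasible (n : ℕ) (b τs : Fin m → ℕ → ℝ) (δ : ℝ)
    (θ θh : ℕ → ℕ → ℕ → Fin m → ℝ) : Prop :=
  (∀ x y z j, 0 ≤ θ x y z j) ∧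
  (∀ x y z j, 0 ≤ θh x y z j) ∧
  sumI n (fun x y z j => (x + y : ℝ) * b j (x + y) * θ x y z j) = 1 ∧
  sumI n (fun x y z j =>
      ((y : ℝ) * b j (x + y) - (z : ℝ) * b j (x + y + 1)) * θ x y z j
        + ((y : ℝ) * τs j (x + y) - (z : ℝ) * τs j (x + y + 1)) * θh x y z j) ≤ 0 ∧
  (∀ x y z j, (1 - δ) * θ x y z j ≤ θh x y z j ∧ θh x y z j ≤ (1 + δ) * θ x y z j)

/-- `p⋆(δ)`: value of the robust-PoA linear program. -/
noncomputable def pstar (n : ℕ) (m : ℕ) (b τs : Fin m → ℕ → ℝ) (δ : ℝ) : ℝ :=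
  sInf { r : ℝ | ∃ θ θh : ℕ → ℕ → ℕ → Fin m → ℝ, Feasible n b τs δ θ θh ∧
    r = sumI n (fun x y z j => (x + z : ℝ) * b j (x + z) * θ x y z j) }

end CG

/-!
The game is built on the resources `(x, y, z, j, r)`, `(x, y, z, j) ∈ I`, `r ∈ ℤ/n`: such a
resource carries only the basis function `b_j`, with coefficient `θ⋆(x, y, z, j)` in the cost and
`θ̂⋆(x, y, z, j)` in the toll. Agent `i` uses it at the equilibrium iff `r + i mod n ∈ [0, x + y)`
and in the comparison allocation iff `r + i mod n ∈ [y, x + y + z)`, so the two loads are `x + y`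
and `x + z`, and the rotation by `r` makes every agent face the same sums. Hence
`L(a^NE) = n · (i) = n`, `L(a') = n · p⋆(δ)`, and each agent's gain from switching is the
left-hand side of (ii), which is `≤ 0`.

For the price of anarchy one also needs that no allocation `w` costs less than `n · p⋆(δ)`. This
is the other half of Proposition 2: for an equilibrium `a`, the weights
`θ(x, y, z, j) = Σ_{e of type (x, y, z)} γ_{e,j} / L(a)`, where the type `(x, y, z)` of `e`
counts the agents using `e` in both `a` and `w`, only in `a`, and only in `w`, are feasible, so
`p⋆(δ) · L(a) ≤ L(w)`.
-/

namespace CG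

section SumI

variable {n m : ℕ}

lemma sumI_congr {f g : ℕ → ℕ → ℕ → Fin m → ℝ} (h : ∀ x y z j, f x y z j = g x y z j) :
    sumI n f = sumI n g := by
  rw [show f = g from funext fun x => funext fun y => funext fun z => funext (h x y z)]

lemma sumI_add (f g : ℕ → ℕ → ℕ → Fin m → ℝ) :
    sumI n (fun x y z j => f x y z j + g x y z j) = sumI n f + sumI n g := by
  simp only [sumI, ← sum_add_distrib, ite_add_ite, add_zero]

lemma sumI_sub (f g : ℕ → ℕ → ℕ → Fin m → ℝ) :
    sumI n (fun x y z j => f x y z j - g x y z j) = sumI n f - sumI n g := by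
  simp only [sumI, ← sum_sub_distrib, ite_sub_ite, sub_zero]

lemma sumI_div (f : ℕ → ℕ → ℕ → Fin m → ℝ) (c : ℝ) :
    sumI n (fun x y z j => f x y z j / c) = sumI n f / c := by
  simp only [sumI, sum_div, ite_div, zero_div]

lemma sumI_sum {ι : Type*} (s : Finset ι) (f : ι → ℕ → ℕ → ℕ → Fin m → ℝ) :
    sumI n (fun x y z j => ∑ e ∈ s, f e x y z j) = ∑ e ∈ s, sumI n (f e) := by
  simp only [sumI, ite_sum_zero]
  rw [sum_comm (s := s)]; refine sum_congr rfl fun x _ => ?_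
  rw [sum_comm (s := s)]; refine sum_congr rfl fun y _ => ?_
  rw [sum_comm (s := s)]; refine sum_congr rfl fun z _ => ?_
  exact sum_comm

lemma sumI_nonneg {f : ℕ → ℕ → ℕ → Fin m → ℝ} (h : ∀ x y z j, 0 ≤ f x y z j) :
    0 ≤ sumI n f := by
  unfold sumI
  refine sum_nonneg fun x _ => sum_nonneg fun y _ => sum_nonneg fun z _ =>
    sum_nonneg fun j _ => ?_
  split_ifs
  exacts [h x y z j, le_rfl]

lemma sumI_ite_eq {x₀ y₀ z₀ : ℕ} (h : x₀ + y₀ + z₀ ≤ n) {f : ℕ → ℕ → ℕ → Fin m → ℝ}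
    (hf : ∀ j, f 0 0 0 j = 0) :
    sumI n (fun x y z j => if x₀ = x ∧ y₀ = y ∧ z₀ = z then f x y z j else 0)
      = ∑ j, f x₀ y₀ z₀ j := by
  unfold sumI
  rw [sum_eq_single_of_mem x₀ (mem_range.2 (by omega)) fun x _ hx => by simp [Ne.symm hx],
    sum_eq_single_of_mem y₀ (mem_range.2 (by omega)) fun y _ hy => by simp [Ne.symm hy],
    sum_eq_single_of_mem z₀ (mem_range.2 (by omega)) fun z _ hz => by simp [Ne.symm hz]]
  refine sum_congr rfl fun j _ => ?_
  obtain h₀ | h₀ := Nat.eq_zero_or_pos (x₀ + y₀ + z₀)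
  · obtain ⟨rfl, rfl, rfl⟩ : x₀ = 0 ∧ y₀ = 0 ∧ z₀ = 0 := by omega
    simp [hf]
  · simp [h, Nat.one_le_iff_ne_zero.2 h₀.ne']

end SumI

lemma resToll_eq_resCost {m : ℕ} {E : Type} (τs : Fin m → ℕ → ℝ) (γt : E → Fin m → ℝ) (e : E)
    (k : ℕ) : resToll τs γt e k = resCost τs γt e k := rfl

lemma sum_card_filter_mul {ι E : Type} [Fintype ι] [Fintype E] (P : ι → E → Prop)
    [∀ i e, Decidable (P i e)] (f : E → ℝ) :
    ∑ e, (#{i | P i e} : ℝ) * f e = ∑ i, ∑ e, if P i e then f e else 0 := by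
  rw [sum_comm]
  refine sum_congr rfl fun e _ => ?_
  rw [← sum_filter, sum_const, nsmul_eq_mul]

section Game

variable {n m : ℕ} {E : Type} [DecidableEq E]

lemma load_update_of_mem {a : Fin n → Finset E} {i : Fin n} {s : Finset E} {e : E}
    (ha : e ∈ a i) (hs : e ∈ s) : load (Function.update a i s) e = load a e := by
  unfold load
  congr 1
  refine filter_congr fun i' _ => ?_
  rcases eq_or_ne i' i with rfl | hne
  · simp [ha, hs]
  · simp [Function.update_of_ne hne]

lemma load_update_of_notMem {a : Fin n → Finset E} {i : Fin n} {s : Finset E} {e : E}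
    (ha : e ∉ a i) (hs : e ∈ s) : load (Function.update a i s) e = load a e + 1 := by
  unfold load
  rw [← card_insert_of_notMem (a := i) (s := univ.filter fun i' => e ∈ a i') (by simp [ha])]
  congr 1
  ext i'
  rcases eq_or_ne i' i with rfl | hne
  · simp [hs]
  · simp [hne]

lemma agentCost_update (b τs : Fin m → ℕ → ℝ) (γ γt : E → Fin m → ℝ)
    (a : Fin n → Finset E) (i : Fin n) (s : Finset E) :
    agentCost b τs γ γt (Function.update a i s) i
      = ∑ e ∈ s, if e ∈ a i then
          resCost b γ e (load a e) + resToll τs γt e (load a e)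
        else
          resCost b γ e (load a e + 1) + resToll τs γt e (load a e + 1) := by
  unfold agentCost
  rw [Function.update_self]
  refine sum_congr rfl fun e he => ?_
  split_ifs with h
  · rw [load_update_of_mem h he]
  · rw [load_update_of_notMem h he]

lemma sum_load_mul [Fintype E] (a : Fin n → Finset E) (f : E → ℝ) :
    ∑ e, (load a e : ℝ) * f e = ∑ i, ∑ e ∈ a i, f e := by
  simp only [load, sum_card_filter_mul, sum_ite_mem, univ_inter]

lemma sysCost_eq_sum_sum [Fintype E] (b : Fin m → ℕ → ℝ) (γ : E → Fin m → ℝ)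
    (a : Fin n → Finset E) :
    sysCost b γ a = ∑ i, ∑ e ∈ a i, resCost b γ e (load a e) :=
  sum_load_mul a _

lemma labelX_add_labelY (a w : Fin n → Finset E) (e : E) :
    labelX a w e + labelY a w e = load a e := by
  simpa only [labelX, labelY, load, filter_filter] using
    card_filter_add_card_filter_not (s := univ.filter fun i => e ∈ a i) (fun i => e ∈ w i)

lemma labelX_add_labelZ (a w : Fin n → Finset E) (e : E) :
    labelX a w e + labelZ a w e = load w e := by
  simpa only [labelX, labelZ, load, filter_filter, and_comm] using
    card_filter_add_card_filter_not (s := univ.filter fun i => e ∈ w i) (fun i => e ∈ a i)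

lemma labelX_add_labelY_add_labelZ_le (a w : Fin n → Finset E) (e : E) :
    labelX a w e + labelY a w e + labelZ a w e ≤ n := by
  rw [labelX_add_labelY]
  calc load a e + labelZ a w e
      ≤ #{i | e ∈ a i} + #{i | ¬ e ∈ a i} := by
        unfold load labelZ
        gcongr with i
        exact fun h => h.1
    _ = n := by rw [card_filter_add_card_filter_not, card_univ, Fintype.card_fin]

lemma sum_agentCost_sub_sum_agentCost_update [Fintype E] (b τs : Fin m → ℕ → ℝ)
    (γ γt : E → Fin m → ℝ) (a w : Fin n → Finset E) :
    ∑ i, agentCost b τs γ γt a i - ∑ i, agentCost b τs γ γt (Function.update a i (w i)) i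
      = ∑ e, ((labelY a w e : ℝ) * (resCost b γ e (load a e) + resToll τs γt e (load a e))
          - (labelZ a w e : ℝ)
            * (resCost b γ e (load a e + 1) + resToll τs γt e (load a e + 1))) := by
  set C : E → ℕ → ℝ := fun e k => resCost b γ e k + resToll τs γt e k
  have hstay : ∑ i, agentCost b τs γ γt a i
      = ∑ e, ((labelX a w e + labelY a w e : ℕ) : ℝ) * C e (load a e) := by
    simp only [labelX_add_labelY, sum_load_mul]
    rfl
  have hmove : ∑ i, agentCost b τs γ γt (Function.update a i (w i)) i
      = ∑ e, ((labelX a w e : ℝ) * C e (load a e)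
          + (labelZ a w e : ℝ) * C e (load a e + 1)) := by
    simp only [labelX, labelZ]
    rw [sum_add_distrib, sum_card_filter_mul (fun i e => e ∈ a i ∧ e ∈ w i),
      sum_card_filter_mul (fun i e => e ∉ a i ∧ e ∈ w i), ← sum_add_distrib]
    refine sum_congr rfl fun i _ => ?_
    rw [agentCost_update, ← Fintype.sum_ite_mem (w i), ← sum_add_distrib]
    refine sum_congr rfl fun e _ => ?_
    by_cases hw : e ∈ w i <;> by_cases ha : e ∈ a i <;> simp [hw, ha, C]
  rw [hstay, hmove, ← sum_sub_distrib]
  refine sum_congr rfl fun e _ => ?_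
  push_cast
  ring

lemma sumI_mul_labelSum [Fintype E] (γ : E → Fin m → ℝ) (a w : Fin n → Finset E)
    {g : ℕ → ℕ → ℕ → Fin m → ℝ} (hg : ∀ j, g 0 0 0 j = 0) :
    sumI n (fun x y z j => g x y z j * labelSum γ a w x y z j)
      = ∑ e, ∑ j, g (labelX a w e) (labelY a w e) (labelZ a w e) j * γ e j := by
  simp only [labelSum, mul_sum, sum_filter, mul_ite, mul_zero]
  rw [sumI_sum]
  refine sum_congr rfl fun e _ => ?_
  exact sumI_ite_eq (f := fun x y z j => g x y z j * γ e j)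
    (labelX_add_labelY_add_labelZ_le a w e) (by simp [hg])

lemma sumI_labelSum_eq_sysCost_left [Fintype E] (b : Fin m → ℕ → ℝ) (γ : E → Fin m → ℝ)
    (a w : Fin n → Finset E) :
    sumI n (fun x y z j => (x + y : ℝ) * b j (x + y) * labelSum γ a w x y z j)
      = sysCost b γ a := by
  rw [sumI_mul_labelSum γ a w (by simp)]
  refine sum_congr rfl fun e _ => ?_
  rw [resCost, mul_sum, ← labelX_add_labelY a w e]
  push_cast
  exact sum_congr rfl fun j _ => by ring

lemma sumI_labelSum_eq_sysCost_right [Fintype E] (b : Fin m → ℕ → ℝ) (γ : E → Fin m → ℝ)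
    (a w : Fin n → Finset E) :
    sumI n (fun x y z j => (x + z : ℝ) * b j (x + z) * labelSum γ a w x y z j)
      = sysCost b γ w := by
  rw [sumI_mul_labelSum γ a w (by simp)]
  refine sum_congr rfl fun e _ => ?_
  rw [resCost, mul_sum, ← labelX_add_labelZ a w e]
  push_cast
  exact sum_congr rfl fun j _ => by ring

lemma sumI_labelSum_eq_sum_agentCost_sub [Fintype E] (b τs : Fin m → ℕ → ℝ)
    (γ γt : E → Fin m → ℝ) (a w : Fin n → Finset E) :
    sumI n (fun x y z j =>
        ((y : ℝ) * b j (x + y) - (z : ℝ) * b j (x + y + 1)) * labelSum γ a w x y z j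
          + ((y : ℝ) * τs j (x + y) - (z : ℝ) * τs j (x + y + 1)) * labelSum γt a w x y z j)
      = ∑ i, agentCost b τs γ γt a i
          - ∑ i, agentCost b τs γ γt (Function.update a i (w i)) i := by
  rw [sumI_add, sumI_mul_labelSum γ a w (by simp), sumI_mul_labelSum γt a w (by simp),
    ← sum_add_distrib, sum_agentCost_sub_sum_agentCost_update]
  refine sum_congr rfl fun e _ => ?_
  simp only [resCost, resToll, ← labelX_add_labelY a w e, mul_add, mul_sum, ← sum_add_distrib,
    ← sum_sub_distrib]
  exact sum_congr rfl fun j _ => by ring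

end Game

section LinearProgram

variable {n m : ℕ}

lemma feasible_div {b τs : Fin m → ℕ → ℝ} {δ c : ℝ} {θ θh : ℕ → ℕ → ℕ → Fin m → ℝ}
    (hθ : ∀ x y z j, 0 ≤ θ x y z j) (hθh : ∀ x y z j, 0 ≤ θh x y z j)
    (hc : sumI n (fun x y z j => (x + y : ℝ) * b j (x + y) * θ x y z j) = c) (hc₀ : 0 < c)
    (hineq : sumI n (fun x y z j =>
      ((y : ℝ) * b j (x + y) - (z : ℝ) * b j (x + y + 1)) * θ x y z j
        + ((y : ℝ) * τs j (x + y) - (z : ℝ) * τs j (x + y + 1)) * θh x y z j) ≤ 0)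
    (hband : ∀ x y z j, (1 - δ) * θ x y z j ≤ θh x y z j ∧ θh x y z j ≤ (1 + δ) * θ x y z j) :
    Feasible n b τs δ (fun x y z j => θ x y z j / c) (fun x y z j => θh x y z j / c) := by
  refine ⟨fun x y z j => div_nonneg (hθ x y z j) hc₀.le,
    fun x y z j => div_nonneg (hθh x y z j) hc₀.le, ?_, ?_, fun x y z j => ?_⟩
  · simp only [← mul_div_assoc]
    rw [sumI_div, hc, div_self hc₀.ne']
  · simp only [← mul_div_assoc, ← add_div]
    rw [sumI_div]
    exact div_nonpos_of_nonpos_of_nonneg hineq hc₀.le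
  · simp only [← mul_div_assoc]
    exact ⟨div_le_div_of_nonneg_right (hband x y z j).1 hc₀.le,
      div_le_div_of_nonneg_right (hband x y z j).2 hc₀.le⟩

lemma pstar_le_of_feasible {b τs : Fin m → ℕ → ℝ} (hb : ∀ j k, 0 ≤ b j k) {δ : ℝ}
    {θ θh : ℕ → ℕ → ℕ → Fin m → ℝ} (hf : Feasible n b τs δ θ θh) :
    pstar n m b τs δ ≤ sumI n (fun x y z j => (x + z : ℝ) * b j (x + z) * θ x y z j) := by
  refine csInf_le ⟨0, ?_⟩ ⟨θ, θh, hf, rfl⟩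
  rintro _ ⟨θ', θh', hf', rfl⟩
  exact sumI_nonneg fun x y z j => by have := hb j (x + z); have := hf'.1 x y z j; positivity

end LinearProgram

section PriceOfAnarchy

variable {n m : ℕ} {E : Type} [Fintype E] [DecidableEq E]

lemma pstar_mul_sysCost_le {b τs : Fin m → ℕ → ℝ} (hb : ∀ j k, 0 ≤ b j k) {δ : ℝ}
    {γ γt : E → Fin m → ℝ} (hγ : ∀ e j, 0 ≤ γ e j) (hγt : ∀ e j, 0 ≤ γt e j)
    (hband : ∀ e j, (1 - δ) * γ e j ≤ γt e j ∧ γt e j ≤ (1 + δ) * γ e j)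
    {a w : Fin n → Finset E}
    (hdev : ∀ i, agentCost b τs γ γt a i ≤ agentCost b τs γ γt (Function.update a i (w i)) i)
    (ha : 0 < sysCost b γ a) :
    pstar n m b τs δ * sysCost b γ a ≤ sysCost b γ w := by
  have hfeas := feasible_div (τs := τs) (δ := δ) (θ := labelSum γ a w) (θh := labelSum γt a w)
    (fun x y z j => sum_nonneg fun e _ => hγ e j) (fun x y z j => sum_nonneg fun e _ => hγt e j)
    (sumI_labelSum_eq_sysCost_left b γ a w) ha
    (by rw [sumI_labelSum_eq_sum_agentCost_sub, sub_nonpos]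
        exact sum_le_sum fun i _ => hdev i)
    (fun x y z j => by
      simp only [labelSum, mul_sum]
      exact ⟨sum_le_sum fun e _ => (hband e j).1, sum_le_sum fun e _ => (hband e j).2⟩)
  have hle := pstar_le_of_feasible hb hfeas
  simp only [← mul_div_assoc] at hle
  rwa [sumI_div, sumI_labelSum_eq_sysCost_right, le_div_iff₀ ha] at hle

lemma one_div_le_PoA {A : Fin n → Finset (Finset E)} {b τs : Fin m → ℕ → ℝ}
    {γ γt : E → Fin m → ℝ} {a a' : Fin n → Finset E} {p : ℝ} (hp : 0 < p)
    (ha : IsNash A b τs γ γt a) (ha' : ∀ i, a' i ∈ A i)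
    (hcost : sysCost b γ a' = p * sysCost b γ a) (hpos : 0 < sysCost b γ a)
    (hopt : ∀ w : Fin n → Finset E, (∀ i, w i ∈ A i) → p * sysCost b γ a ≤ sysCost b γ w) :
    1 / p ≤ PoA A b τs γ γt := by
  have hinf : sInf (sysCost b γ '' {w | ∀ i, w i ∈ A i}) = p * sysCost b γ a :=
    le_antisymm (csInf_le (Set.toFinite _).bddBelow ⟨a', ha', hcost⟩)
      (le_csInf ⟨_, a', ha', rfl⟩ (by rintro _ ⟨w, hw, rfl⟩; exact hopt w hw))
  have hsup : sysCost b γ a ≤ sSup (sysCost b γ '' {w | IsNash A b τs γ γt w}) :=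
    le_csSup (Set.toFinite _).bddAbove ⟨a, ha, rfl⟩
  calc 1 / p = sysCost b γ a / (p * sysCost b γ a) := by field_simp
    _ ≤ PoA A b τs γ γt := by unfold PoA; rw [hinf]; gcongr

end PriceOfAnarchy

namespace Cyclic

variable (n m : ℕ)

abbrev Res : Type := Fin (n + 1) × Fin (n + 1) × Fin (n + 1) × Fin m × Fin n

noncomputable def encode : Res n m ≃ Fin (Fintype.card (Res n m)) := Fintype.equivFin _

abbrev MemI (x y z : ℕ) : Prop := 1 ≤ x + y + z ∧ x + y + z ≤ n

noncomputable def window (lo hi : ℕ → ℕ → ℕ → ℕ) (i : Fin n) :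
    Finset (Fin (Fintype.card (Res n m))) :=
  (univ.filter fun t : Res n m =>
      MemI n t.1 t.2.1 t.2.2.1 ∧ lo t.1 t.2.1 t.2.2.1 ≤ (t.2.2.2.2 + i : Fin n)
        ∧ ((t.2.2.2.2 + i : Fin n) : ℕ) < hi t.1 t.2.1 t.2.2.1).map
    (encode n m).toEmbedding

noncomputable def weight (θ : ℕ → ℕ → ℕ → Fin m → ℝ) (e : Fin (Fintype.card (Res n m)))
    (j : Fin m) : ℝ :=
  match (encode n m).symm e with
  | (x, y, z, j', _) => if j = j' then θ x y z j else 0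

noncomputable def neProfile : Fin n → Finset (Fin (Fintype.card (Res n m))) :=
  window n m (fun _ _ _ => 0) (fun x y _ => x + y)

noncomputable def optProfile : Fin n → Finset (Fin (Fintype.card (Res n m))) :=
  window n m (fun _ y _ => y) (fun x y z => x + y + z)

variable {n m}

@[simp]
lemma encode_mem_window {lo hi : ℕ → ℕ → ℕ → ℕ} {i : Fin n} {x y z : Fin (n + 1)} {j : Fin m}
    {r : Fin n} :
    encode n m (x, y, z, j, r) ∈ window n m lo hi i
      ↔ MemI n x y z ∧ lo x y z ≤ (r + i : Fin n) ∧ ((r + i : Fin n) : ℕ) < hi x y z := by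
  simp [window]

lemma resCost_weight (b : Fin m → ℕ → ℝ) (θ : ℕ → ℕ → ℕ → Fin m → ℝ) (x y z : Fin (n + 1))
    (j : Fin m) (r : Fin n) (k : ℕ) :
    resCost b (weight n m θ) (encode n m (x, y, z, j, r)) k = θ x y z j * b j k := by
  simp [resCost, weight, ite_mul]

lemma weight_nonneg {θ : ℕ → ℕ → ℕ → Fin m → ℝ} (hθ : ∀ x y z j, 0 ≤ θ x y z j)
    (e : Fin (Fintype.card (Res n m))) (j : Fin m) : 0 ≤ weight n m θ e j := by
  unfold weight
  split
  split_ifs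
  exacts [hθ _ _ _ _, le_rfl]

lemma weight_band {δ : ℝ} {θ θh : ℕ → ℕ → ℕ → Fin m → ℝ}
    (hband : ∀ x y z j, (1 - δ) * θ x y z j ≤ θh x y z j ∧ θh x y z j ≤ (1 + δ) * θ x y z j)
    (e : Fin (Fintype.card (Res n m))) (j : Fin m) :
    (1 - δ) * weight n m θ e j ≤ weight n m θh e j
      ∧ weight n m θh e j ≤ (1 + δ) * weight n m θ e j := by
  unfold weight
  split
  split_ifs
  exacts [hband _ _ _ _, by simp]

lemma abs_weight_sub_le {δ : ℝ} {θ θh : ℕ → ℕ → ℕ → Fin m → ℝ}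
    (hband : ∀ x y z j, (1 - δ) * θ x y z j ≤ θh x y z j ∧ θh x y z j ≤ (1 + δ) * θ x y z j)
    (e : Fin (Fintype.card (Res n m))) (j : Fin m) :
    |weight n m θh e j - weight n m θ e j| ≤ δ * weight n m θ e j := by
  have := weight_band hband e j
  exact abs_sub_le_iff.2 ⟨by linarith, by linarith⟩

lemma card_filter_val_add_mem_Ico [NeZero n] (c : Fin n) {lo hi : ℕ} (h : hi ≤ n) :
    #{i : Fin n | lo ≤ ((i + c : Fin n) : ℕ) ∧ ((i + c : Fin n) : ℕ) < hi} = hi - lo := by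
  rw [← Nat.card_Ico]
  refine card_bij (fun i _ => ((i + c : Fin n) : ℕ)) (fun i hi => by simpa using hi)
    (fun i₁ _ i₂ _ h => add_right_cancel (Fin.val_injective h)) fun d hd => ?_
  rw [mem_Ico] at hd
  exact ⟨⟨d, by omega⟩ - c, by simp [hd], by simp⟩

lemma load_window [NeZero n] {lo hi : ℕ → ℕ → ℕ → ℕ} {x y z : Fin (n + 1)} {j : Fin m}
    {r : Fin n} (hI : MemI n x y z) (hhi : hi x y z ≤ n) :
    load (window n m lo hi) (encode n m (x, y, z, j, r)) = hi x y z - lo x y z := by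
  simp only [load, encode_mem_window, and_iff_right hI, add_comm r]
  exact card_filter_val_add_mem_Ico r hhi

lemma sum_fin_eq_sumI (f : ℕ → ℕ → ℕ → Fin m → ℝ) :
    ∑ x : Fin (n + 1), ∑ y : Fin (n + 1), ∑ z : Fin (n + 1), ∑ j,
      (if MemI n x y z then f x y z j else 0) = sumI n f := by
  simp only [sumI, sum_range]

lemma sum_window [NeZero n] {lo hi : ℕ → ℕ → ℕ → ℕ}
    (hhi : ∀ x y z, MemI n x y z → hi x y z ≤ n) (i : Fin n)
    (f : Fin (Fintype.card (Res n m)) → ℝ) (F : ℕ → ℕ → ℕ → Fin m → ℝ)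
    (hf : ∀ (x y z : Fin (n + 1)) j r, MemI n x y z →
      f (encode n m (x, y, z, j, r)) = F x y z j) :
    ∑ e ∈ window n m lo hi i, f e
      = sumI n (fun x y z j => ((hi x y z - lo x y z : ℕ) : ℝ) * F x y z j) := by
  rw [window, sum_map, sum_filter, ← sum_fin_eq_sumI]
  simp only [Fintype.sum_prod_type]
  refine sum_congr rfl fun x _ => sum_congr rfl fun y _ => sum_congr rfl fun z _ =>
    sum_congr rfl fun j _ => ?_
  by_cases hI : MemI n x y z
  · simp only [Equiv.coe_toEmbedding, and_iff_right hI, if_pos hI]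
    rw [← sum_filter, sum_congr rfl fun r _ => hf x y z j r hI, sum_const,
      card_filter_val_add_mem_Ico i (hhi _ _ _ hI), nsmul_eq_mul]
  · simp [hI]

lemma agentCost_window [NeZero n] (b τs : Fin m → ℕ → ℝ) (θ θh : ℕ → ℕ → ℕ → Fin m → ℝ)
    {lo hi : ℕ → ℕ → ℕ → ℕ} (hhi : ∀ x y z, MemI n x y z → hi x y z ≤ n) (i : Fin n) :
    agentCost b τs (weight n m θ) (weight n m θh) (window n m lo hi) i
      = sumI n (fun x y z j => ((hi x y z - lo x y z : ℕ) : ℝ)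
          * (θ x y z j * b j (hi x y z - lo x y z) + θh x y z j * τs j (hi x y z - lo x y z))) :=
  sum_window hhi i _ _ fun x y z j r hI => by
    rw [load_window hI (hhi _ _ _ hI), resToll_eq_resCost, resCost_weight, resCost_weight]

lemma sysCost_window [NeZero n] (b : Fin m → ℕ → ℝ) (θ : ℕ → ℕ → ℕ → Fin m → ℝ)
    {lo hi : ℕ → ℕ → ℕ → ℕ} (hhi : ∀ x y z, MemI n x y z → hi x y z ≤ n) :
    sysCost b (weight n m θ) (window n m lo hi)
      = n * sumI n (fun x y z j => ((hi x y z - lo x y z : ℕ) : ℝ)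
          * (θ x y z j * b j (hi x y z - lo x y z))) := by
  rw [sysCost_eq_sum_sum, sum_congr rfl fun i _ => sum_window hhi i _
    (fun x y z j => θ x y z j * b j (hi x y z - lo x y z)) fun x y z j r hI => by
      rw [load_window hI (hhi _ _ _ hI), resCost_weight],
    sum_const, card_univ, Fintype.card_fin, nsmul_eq_mul]

lemma optProfile_filter_mem_neProfile (i : Fin n) :
    (optProfile n m i).filter (· ∈ neProfile n m i)
      = window n m (fun _ y _ => y) (fun x y _ => x + y) i := by
  ext e
  obtain ⟨⟨x, y, z, j, r⟩, rfl⟩ := (encode n m).surjective e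
  rw [mem_filter]
  simp only [optProfile, neProfile, encode_mem_window]
  omega

lemma optProfile_filter_notMem_neProfile (i : Fin n) :
    (optProfile n m i).filter (· ∉ neProfile n m i)
      = window n m (fun x y _ => x + y) (fun x y z => x + y + z) i := by
  ext e
  obtain ⟨⟨x, y, z, j, r⟩, rfl⟩ := (encode n m).surjective e
  rw [mem_filter]
  simp only [optProfile, neProfile, encode_mem_window]
  omega

lemma sysCost_neProfile [NeZero n] (b : Fin m → ℕ → ℝ) (θ : ℕ → ℕ → ℕ → Fin m → ℝ) :
    sysCost b (weight n m θ) (neProfile n m)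
      = n * sumI n (fun x y z j => (x + y : ℝ) * b j (x + y) * θ x y z j) := by
  rw [neProfile, sysCost_window b θ fun x y z hI => by omega]
  congr 1
  refine sumI_congr fun x y z j => ?_
  rw [Nat.sub_zero]
  push_cast
  ring

lemma sysCost_optProfile [NeZero n] (b : Fin m → ℕ → ℝ) (θ : ℕ → ℕ → ℕ → Fin m → ℝ) :
    sysCost b (weight n m θ) (optProfile n m)
      = n * sumI n (fun x y z j => (x + z : ℝ) * b j (x + z) * θ x y z j) := by
  rw [optProfile, sysCost_window b θ fun x y z hI => hI.2]
  congr 1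
  refine sumI_congr fun x y z j => ?_
  rw [show x + y + z - y = x + z by omega]
  push_cast
  ring

lemma agentCost_neProfile [NeZero n] (b τs : Fin m → ℕ → ℝ) (θ θh : ℕ → ℕ → ℕ → Fin m → ℝ)
    (i : Fin n) :
    agentCost b τs (weight n m θ) (weight n m θh) (neProfile n m) i
      = sumI n (fun x y z j =>
          (x + y : ℝ) * (θ x y z j * b j (x + y) + θh x y z j * τs j (x + y))) := by
  rw [neProfile, agentCost_window b τs θ θh (fun x y z hI => by omega)]
  simp only [Nat.sub_zero, Nat.cast_add]

lemma agentCost_update_neProfile_optProfile [NeZero n] (b τs : Fin m → ℕ → ℝ)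
    (θ θh : ℕ → ℕ → ℕ → Fin m → ℝ) (i : Fin n) :
    agentCost b τs (weight n m θ) (weight n m θh)
        (Function.update (neProfile n m) i (optProfile n m i)) i
      = sumI n (fun x y z j =>
          (x : ℝ) * (θ x y z j * b j (x + y) + θh x y z j * τs j (x + y))
            + (z : ℝ) * (θ x y z j * b j (x + y + 1) + θh x y z j * τs j (x + y + 1))) := by
  have hload : ∀ (x y z : Fin (n + 1)) j r, MemI n x y z →
      load (neProfile n m) (encode n m (x, y, z, j, r)) = x + y := fun x y z j r hI => by
    rw [neProfile, load_window hI (by omega), Nat.sub_zero]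
  rw [agentCost_update, sum_ite, optProfile_filter_mem_neProfile,
    optProfile_filter_notMem_neProfile,
    sum_window (fun x y z hI => by omega) i _ (fun x y z j =>
      θ x y z j * b j (x + y) + θh x y z j * τs j (x + y)) fun x y z j r hI => by
        rw [hload x y z j r hI, resToll_eq_resCost, resCost_weight, resCost_weight],
    sum_window (fun x y z hI => hI.2) i _ (fun x y z j =>
      θ x y z j * b j (x + y + 1) + θh x y z j * τs j (x + y + 1)) fun x y z j r hI => by
        rw [hload x y z j r hI, resToll_eq_resCost, resCost_weight, resCost_weight],
    ← sumI_add]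
  refine sumI_congr fun x y z j => ?_
  rw [Nat.add_sub_cancel, Nat.add_sub_cancel_left]

lemma isNash_neProfile [NeZero n] {b τs : Fin m → ℕ → ℝ} {θ θh : ℕ → ℕ → ℕ → Fin m → ℝ}
    (hineq : sumI n (fun x y z j =>
      ((y : ℝ) * b j (x + y) - (z : ℝ) * b j (x + y + 1)) * θ x y z j
        + ((y : ℝ) * τs j (x + y) - (z : ℝ) * τs j (x + y + 1)) * θh x y z j) ≤ 0) :
    IsNash (fun i => {neProfile n m i, optProfile n m i}) b τs (weight n m θ) (weight n m θh)
      (neProfile n m) := by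
  refine ⟨fun i => mem_insert_self _ _, fun i s hs => ?_⟩
  rcases mem_insert.1 hs with rfl | hs
  · rw [Function.update_eq_self]
  · rw [mem_singleton.1 hs, ← sub_nonpos, agentCost_neProfile,
      agentCost_update_neProfile_optProfile, ← sumI_sub]
    refine le_of_eq_of_le (sumI_congr fun x y z j => ?_) hineq
    ring

end Cyclic

end CG

theorem robust_poa_tightness_general
    {m : ℕ} (n : ℕ) (b τs : Fin m → ℕ → ℝ)
    (hb_nonneg : ∀ j k, 0 ≤ b j k)
    (δ : ℝ)
    (θs θhs : ℕ → ℕ → ℕ → Fin m → ℝ)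
    (hfeas : CG.Feasible n b τs δ θs θhs)
    (hopt : CG.sumI n (fun x y z j => (x + z : ℝ) * b j (x + z) * θs x y z j)
      = CG.pstar n m b τs δ)
    (hpos : 0 < CG.pstar n m b τs δ) :
    ∃ (K : ℕ) (A : Fin n → Finset (Finset (Fin K)))
      (γ γt : Fin K → Fin m → ℝ) (a a' : Fin n → Finset (Fin K)),
      (∀ i, (A i).Nonempty) ∧
      (∀ e j, 0 ≤ γ e j) ∧ (∀ e j, 0 ≤ γt e j) ∧
      (∀ e j, |γt e j - γ e j| ≤ δ * γ e j) ∧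
      CG.IsNash A b τs γ γt a ∧
      (∀ i, a' i ∈ A i) ∧
      CG.sysCost b γ a' = CG.pstar n m b τs δ * CG.sysCost b γ a ∧
      0 < CG.sysCost b γ a ∧
      1 / CG.pstar n m b τs δ ≤ CG.PoA A b τs γ γt := by
  open CG CG.Cyclic in
  obtain ⟨hθ, hθh, hnorm, hineq, hband⟩ := hfeas
  have : NeZero n := ⟨by rintro rfl; simp [sumI] at hnorm⟩
  have hNash := isNash_neProfile (n := n) hineq
  have hopt_mem : ∀ i, optProfile n m i ∈ ({neProfile n m i, optProfile n m i} : Finset _) :=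
    fun i => mem_insert_of_mem (mem_singleton_self _)
  have hne : sysCost b (weight n m θs) (neProfile n m) = n := by
    rw [sysCost_neProfile, hnorm, mul_one]
  have hne_pos : 0 < sysCost b (weight n m θs) (neProfile n m) := by
    rw [hne]
    exact Nat.cast_pos.2 (NeZero.pos n)
  have hcost : sysCost b (weight n m θs) (optProfile n m)
      = pstar n m b τs δ * sysCost b (weight n m θs) (neProfile n m) := by
    rw [sysCost_optProfile, hopt, hne, mul_comm]
  refine ⟨_, _, _, _, _, _, fun i => insert_nonempty _ _, weight_nonneg hθ, weight_nonneg hθh,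
    abs_weight_sub_le hband, hNash, hopt_mem, hcost, hne_pos,
    one_div_le_PoA hpos hNash hopt_mem hcost hne_pos fun w hw => ?_⟩
  exact pstar_mul_sysCost_le hb_nonneg (weight_nonneg hθ) (weight_nonneg hθh) (weight_band hband)
    (fun i => hNash.2 i (w i) (hw i)) hne_pos

/-- tightness direction of Proposition 2: if the robust-PoA linear
program attains its value `p⋆(δ) > 0` at some feasible pair `(θ⋆, θ̂⋆)`, then there
is an atomic congestion game (a finite resource set `Fin K`, action sets `A`, cost
parameters `γ`), misspecified parameters `γ̃` with relative error at most `δ`, a pure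
Nash equilibrium `a` of `(G(γ), T(γ̃))` and an allocation `a'` with
`L(a'; γ) = p⋆(δ)·L(a; γ)` and `L(a; γ) > 0`; consequently
`PoA(G(γ), T(γ̃)) ≥ 1/p⋆(δ)`. -/
theorem robust_poa_tightness
    {m : ℕ} (n : ℕ) (b τs : Fin m → ℕ → ℝ)
    (hb_nonneg : ∀ j k, 0 ≤ b j k) (hb_mono : ∀ j, Monotone (b j))
    (hb0 : ∀ j, b j 0 = 0) (hτ0 : ∀ j, τs j 0 = 0)
    (δ : ℝ) (hδ : 0 ≤ δ)
    (θs θhs : ℕ → ℕ → ℕ → Fin m → ℝ)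
    (hfeas : CG.Feasible n b τs δ θs θhs)
    (hopt : CG.sumI n (fun x y z j => (x + z : ℝ) * b j (x + z) * θs x y z j)
      = CG.pstar n m b τs δ)
    (hpos : 0 < CG.pstar n m b τs δ) :
    ∃ (K : ℕ) (A : Fin n → Finset (Finset (Fin K)))
      (γ γt : Fin K → Fin m → ℝ) (a a' : Fin n → Finset (Fin K)),
      (∀ i, (A i).Nonempty) ∧
      (∀ e j, 0 ≤ γ e j) ∧ (∀ e j, 0 ≤ γt e j) ∧
      (∀ e j, |γt e j - γ e j| ≤ δ * γ e j) ∧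
      CG.IsNash A b τs γ γt a ∧
      (∀ i, a' i ∈ A i) ∧
      CG.sysCost b γ a' = CG.pstar n m b τs δ * CG.sysCost b γ a ∧
      0 < CG.sysCost b γ a ∧
      1 / CG.pstar n m b τs δ ≤ CG.PoA A b τs γ γt :=
  robust_poa_tightness_general n b τs hb_nonneg δ θs θhs hfeas hopt hpos
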